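/- arXiv:2508.05000 — 5 statements merged into one kernel-verified Lean document; each statement's English description precedes it below -/
import Mathlib

section
/- For any rotation matrix R(θ) = [[cos θ, -sin θ],[sin θ, cos θ]] and any matrix P = [[a,b],[c,d]] in SL(2,ℝ), the trace of R(θ)·P·R(θ)·P⁻¹ equals 2 + (a² + b² + c² + d² - 2)·sin²θ. In particular, tr([R(θ), P]) ≥ 2. -/
/-!
Both factors have determinant one, so their inverses are their adjugates and the trace becomes a
polynomial in `a, b, c, d, cos θ, sin θ`; it equals `2 (ad - bc) cos² θ + (a² + b² + c² + d²) sin² θ`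
for every `P`. The inequality then comes from `a² + b² + c² + d² - 2 (ad - bc) = (a - d)² + (b + c)²`.
-/

open Matrix Real

noncomputable def Rot (θ : ℝ) : Matrix (Fin 2) (Fin 2) ℝ :=
  !![Real.cos θ, -Real.sin θ; Real.sin θ, Real.cos θ]

theorem Matrix.inv_eq_adjugate_of_det_eq_one {n R : Type*} [Fintype n] [DecidableEq n]
    [CommRing R] {A : Matrix n n R} (h : A.det = 1) : A⁻¹ = A.adjugate := by
  rw [inv_def, h, Ring.inverse_one, one_smul]

theorem det_Rot (θ : ℝ) : (Rot θ).det = 1 := by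
  rw [Rot, det_fin_two_of]
  linear_combination cos_sq_add_sin_sq θ

theorem Rot_inv (θ : ℝ) : (Rot θ)⁻¹ = !![cos θ, sin θ; -sin θ, cos θ] := by
  rw [inv_eq_adjugate_of_det_eq_one (det_Rot θ), Rot, adjugate_fin_two_of, neg_neg]

theorem trace_Rot_mul_mul_Rot_inv_mul_adjugate (θ a b c d : ℝ) :
    trace (Rot θ * !![a, b; c, d] * (Rot θ)⁻¹ * adjugate !![a, b; c, d])
      = 2 * (a * d - b * c)
        + (a ^ 2 + b ^ 2 + c ^ 2 + d ^ 2 - 2 * (a * d - b * c)) * sin θ ^ 2 := by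
  rw [Rot_inv, Rot, adjugate_fin_two_of]
  simp only [cons_mul, Nat.succ_eq_add_one, Nat.reduceAdd, vecMul_cons, head_cons, smul_cons,
    smul_eq_mul, smul_empty, tail_cons, empty_vecMul, add_zero, add_cons, empty_add_empty,
    empty_mul, Equiv.symm_apply_apply, trace_fin_two_of]
  linear_combination (2 * (a * d - b * c)) * cos_sq_add_sin_sq θ

theorem two_mul_det_le_sum_sq (a b c d : ℝ) :
    2 * (a * d - b * c) ≤ a ^ 2 + b ^ 2 + c ^ 2 + d ^ 2 := by
  nlinarith [sq_nonneg (a - d), sq_nonneg (b + c)]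

/-- For any rotation matrix `R(θ)` and any `P = !![a,b;c,d]` in `SL(2,ℝ)`, the trace of the
commutator `R(θ) P R(θ)⁻¹ P⁻¹` equals `2 + (a²+b²+c²+d²-2)·sin²θ`; in particular it is `≥ 2`. -/
theorem trace_comm_rot (θ a b c d : ℝ) (h : a * d - b * c = 1) :
    Matrix.trace (Rot θ * !![a, b; c, d] * (Rot θ)⁻¹ * (!![a, b; c, d])⁻¹)
      = 2 + (a ^ 2 + b ^ 2 + c ^ 2 + d ^ 2 - 2) * Real.sin θ ^ 2 ∧
    2 ≤ Matrix.trace (Rot θ * !![a, b; c, d] * (Rot θ)⁻¹ * (!![a, b; c, d])⁻¹) := by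
  have htrace : trace (Rot θ * !![a, b; c, d] * (Rot θ)⁻¹ * (!![a, b; c, d])⁻¹)
      = 2 + (a ^ 2 + b ^ 2 + c ^ 2 + d ^ 2 - 2) * sin θ ^ 2 := by
    have hP : (!![a, b; c, d]).det = 1 := by rwa [det_fin_two_of]
    rw [inv_eq_adjugate_of_det_eq_one hP, trace_Rot_mul_mul_Rot_inv_mul_adjugate, h, mul_one]
  refine ⟨htrace, htrace ▸ le_add_of_nonneg_right (mul_nonneg ?_ (sq_nonneg _))⟩
  linarith [two_mul_det_le_sum_sq a b c d]
end

section
/- For any λ with 0 < |λ| < 1 and any β ∈ SL(2,ℝ), the commutator [diag(λ,1/λ), β] is never equal to -I. (Equivalently: if tr([diag(λ,1/λ), β]) = -2 then [diag(λ,1/λ), β] ≠ -I.) -/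
/-!
If `D β D⁻¹ β⁻¹ = -1` then `D β = -β D`; for `D = diag(d)` this says `(dᵢ + dⱼ) βᵢⱼ = 0`
entrywise. Since `l` and `l⁻¹` have the same sign, every `dᵢ + dⱼ` is nonzero, so `β = 0`,
contradicting `det β = 1`.
-/

namespace Matrix

variable {n R : Type*} [Fintype n] [DecidableEq n]

theorem mul_eq_neg_mul_of_mul_mul_inv_mul_inv_eq_neg_one [CommRing R] {A B : Matrix n n R}
    (hA : IsUnit A.det) (hB : IsUnit B.det) (h : A * B * A⁻¹ * B⁻¹ = -1) :
    A * B = -(B * A) := by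
  have hconj : A * B * A⁻¹ = -B := by
    simpa [Matrix.mul_assoc, nonsing_inv_mul B hB] using congrArg (· * B) h
  simpa [Matrix.mul_assoc, nonsing_inv_mul A hA] using congrArg (· * A) hconj

theorem eq_zero_of_diagonal_mul_eq_neg_mul_diagonal [CommRing R] [NoZeroDivisors R] {d : n → R}
    (hd : ∀ i j, d i + d j ≠ 0) {B : Matrix n n R} (h : diagonal d * B = -(B * diagonal d)) :
    B = 0 := by
  ext i j
  have hij : (d i + d j) * B i j = 0 := by
    simpa [add_mul, mul_comm (d j), eq_neg_iff_add_eq_zero] using congrFun (congrFun h i) j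
  exact (mul_eq_zero.mp hij).resolve_left (hd i j)

end Matrix

open Matrix

theorem add_inv_self_ne_zero {K : Type*} [Field K] [LinearOrder K] [IsStrictOrderedRing K]
    {a : K} (ha : a ≠ 0) : a + a⁻¹ ≠ 0 := by
  have : 0 < a * (a + a⁻¹) := by
    rw [mul_add, mul_inv_cancel₀ ha]
    linarith [mul_self_nonneg a]
  exact right_ne_zero_of_mul this.ne'

theorem comm_diag_ne_neg_one_general (l : ℝ) (hl0 : 0 < |l|)
    (β : Matrix (Fin 2) (Fin 2) ℝ) (hβ : β.det = 1) :
    !![l, 0; 0, l⁻¹] * β * (!![l, 0; 0, l⁻¹])⁻¹ * β⁻¹ ≠ -(1 : Matrix (Fin 2) (Fin 2) ℝ) := by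
  intro h
  have hl : l ≠ 0 := abs_pos.mp hl0
  rw [← diagonal_vec2] at h
  have hdet : IsUnit (diagonal ![l, l⁻¹]).det := by
    simp [det_diagonal, Fin.prod_univ_two, hl]
  have hsum : ∀ i j, ![l, l⁻¹] i + ![l, l⁻¹] j ≠ 0 := by
    intro i j
    fin_cases i <;> fin_cases j <;> simp [hl, add_inv_self_ne_zero, add_comm l⁻¹]
  have hβ0 : β = 0 := eq_zero_of_diagonal_mul_eq_neg_mul_diagonal hsum
    (mul_eq_neg_mul_of_mul_mul_inv_mul_inv_eq_neg_one hdet (by simp [hβ]) h)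
  simp [hβ0] at hβ

/-- For `0 < |l| < 1` and any `β ∈ SL(2,ℝ)`, the commutator `[diag(l,1/l), β]` is never `-I`. -/
theorem comm_diag_ne_neg_one (l : ℝ) (hl0 : 0 < |l|) (hl1 : |l| < 1)
    (β : Matrix (Fin 2) (Fin 2) ℝ) (hβ : β.det = 1) :
    !![l, 0; 0, l⁻¹] * β * (!![l, 0; 0, l⁻¹])⁻¹ * β⁻¹ ≠ -(1 : Matrix (Fin 2) (Fin 2) ℝ) :=
  comm_diag_ne_neg_one_general l hl0 β hβ
end

section
/- Let θ₁, θ₂ ∈ (0, 2π) with rotation matrices R(θ₁), R(θ₂), and let C₂ = P·R(θ₂)·P⁻¹ for P ∈ SL(2,ℝ). If tr(R(θ₁)·C₂) > 2, then sin θ₁ · sin θ₂ < 0. -/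
/-!
Conjugating `R(θ₂)` by `P` and expanding gives
`tr(R(θ₁) P R(θ₂) P⁻¹) = 2 cos θ₁ cos θ₂ - tr(PᵀP) sin θ₁ sin θ₂`, and `tr(PᵀP) ≥ 2 det P = 2`.
If `sin θ₁ sin θ₂ ≥ 0`, the trace is therefore at most `2 cos θ₁ cos θ₂ - 2 sin θ₁ sin θ₂ = 2 cos(θ₁ + θ₂) ≤ 2`.
-/

open Matrix Real

theorem Matrix.two_mul_det_le_trace_transpose_mul (P : Matrix (Fin 2) (Fin 2) ℝ) :
    2 * P.det ≤ (Pᵀ * P).trace := by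
  rw [det_fin_two, trace_fin_two, mul_apply, mul_apply]
  simp only [Fin.sum_univ_two, transpose_apply]
  nlinarith [sq_nonneg (P 0 0 - P 1 1), sq_nonneg (P 0 1 + P 1 0)]

theorem trace_rot_mul_conj_adjugate (θ₁ θ₂ : ℝ) (P : Matrix (Fin 2) (Fin 2) ℝ) :
    (Rot θ₁ * (P * Rot θ₂ * P.adjugate)).trace =
      2 * P.det * cos θ₁ * cos θ₂ - (Pᵀ * P).trace * sin θ₁ * sin θ₂ := by
  simp only [Rot, adjugate_fin_two, det_fin_two, trace_fin_two, mul_apply, Fin.sum_univ_two,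
    transpose_apply, of_apply, cons_val', cons_val_zero, cons_val_one, cons_val_fin_one]
  ring

theorem trace_rot_mul_conj (θ₁ θ₂ : ℝ) {P : Matrix (Fin 2) (Fin 2) ℝ} (hP : P.det = 1) :
    (Rot θ₁ * (P * Rot θ₂ * P⁻¹)).trace =
      2 * cos θ₁ * cos θ₂ - (Pᵀ * P).trace * sin θ₁ * sin θ₂ := by
  rw [inv_def, hP, Ring.inverse_one, one_smul, trace_rot_mul_conj_adjugate, hP, mul_one]

theorem sin_mul_sin_neg_of_trace_gt_general (θ₁ θ₂ : ℝ)
    (P : Matrix (Fin 2) (Fin 2) ℝ) (hP : P.det = 1)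
    (htr : 2 < Matrix.trace (Rot θ₁ * (P * Rot θ₂ * P⁻¹))) :
    Real.sin θ₁ * Real.sin θ₂ < 0 := by
  by_contra! hsin
  have htrace : 2 ≤ (Pᵀ * P).trace := by
    simpa [hP] using P.two_mul_det_le_trace_transpose_mul
  have : (Rot θ₁ * (P * Rot θ₂ * P⁻¹)).trace ≤ 2 := calc
    _ = 2 * cos θ₁ * cos θ₂ - (Pᵀ * P).trace * (sin θ₁ * sin θ₂) := by
      rw [trace_rot_mul_conj θ₁ θ₂ hP, mul_assoc _ (sin θ₁)]
    _ ≤ 2 * cos θ₁ * cos θ₂ - 2 * (sin θ₁ * sin θ₂) := by gcongr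
    _ = 2 * cos (θ₁ + θ₂) := by rw [cos_add]; ring
    _ ≤ 2 := by linarith [cos_le_one (θ₁ + θ₂)]
  linarith

/-- If `θ₁, θ₂ ∈ (0, 2π)`, `C₂ = P R(θ₂) P⁻¹` with `P ∈ SL(2,ℝ)` and `tr(R(θ₁) C₂) > 2`,
then `sin θ₁ · sin θ₂ < 0`. -/
theorem sin_mul_sin_neg_of_trace_gt (θ₁ θ₂ : ℝ)
    (h₁ : 0 < θ₁ ∧ θ₁ < 2 * Real.pi) (h₂ : 0 < θ₂ ∧ θ₂ < 2 * Real.pi)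
    (P : Matrix (Fin 2) (Fin 2) ℝ) (hP : P.det = 1)
    (htr : 2 < Matrix.trace (Rot θ₁ * (P * Rot θ₂ * P⁻¹))) :
    Real.sin θ₁ * Real.sin θ₂ < 0 :=
  sin_mul_sin_neg_of_trace_gt_general θ₁ θ₂ P hP htr
end

section
/- Let C₂ = diag(λ, 1/λ) with λ real, |λ| > 1 or 0 < |λ| < 1, and let C₀ = P·R(θ)·P⁻¹ where P = [[a,b],[c,d]] ∈ SL(2,ℝ). Then tr(C₂C₀) = R·cos(θ - α) for R = √((λ + λ⁻¹)² + (λ - λ⁻¹)²(ac + bd)²) and some angle α; in particular R ≥ |λ + λ⁻¹| > 2. -/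
open Matrix Real

/-- Harmonic addition: `α` is the argument of `A + B i`. -/
theorem exists_mul_cos_add_mul_sin_eq_sqrt_mul_cos_sub (A B θ : ℝ) :
    ∃ α : ℝ, A * cos θ + B * sin θ = √(A ^ 2 + B ^ 2) * cos (θ - α) := by
  set z : ℂ := ⟨A, B⟩
  have hnorm : ‖z‖ = √(A ^ 2 + B ^ 2) := by
    rw [Complex.norm_def, Complex.normSq_apply, sq, sq]
  refine ⟨z.arg, ?_⟩
  rw [← hnorm, cos_sub]
  have hcos : ‖z‖ * cos z.arg = A := z.norm_mul_cos_arg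
  have hsin : ‖z‖ * sin z.arg = B := z.norm_mul_sin_arg
  linear_combination -cos θ * hcos - sin θ * hsin

theorem Matrix.inv_fin_two_of_det_eq_one {R : Type*} [CommRing R] {a b c d : R}
    (h : a * d - b * c = 1) : (!![a, b; c, d])⁻¹ = !![d, -b; -c, a] := by
  rw [inv_def, adjugate_fin_two_of, det_fin_two_of, h]
  simp

theorem trace_diag_mul_conj_rot (l m θ a b c d : ℝ) (h : a * d - b * c = 1) :
    trace (!![l, 0; 0, m] * (!![a, b; c, d] * Rot θ * (!![a, b; c, d])⁻¹))
      = (l + m) * cos θ + (l - m) * (a * c + b * d) * sin θ := by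
  rw [inv_fin_two_of_det_eq_one h, Rot]
  simp only [mul_fin_two, trace_fin_two_of]
  linear_combination (l + m) * cos θ * h

theorem two_lt_abs_add_inv {l : ℝ} (hl0 : l ≠ 0) (hl1 : |l| ≠ 1) : 2 < |l + l⁻¹| := by
  have hl : 0 < |l| := abs_pos.2 hl0
  -- `l` and `l⁻¹` have the same sign.
  have hmul : |l + l⁻¹| * |l| = |l| ^ 2 + 1 := by
    rw [← abs_mul, add_mul, inv_mul_cancel₀ hl0, ← sq, sq_abs, abs_of_pos (by positivity)]
  have hsq : 0 < (|l| - 1) ^ 2 := by positivity [sub_ne_zero.2 hl1]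
  nlinarith

/-- For `C₂ = diag(l, 1/l)` hyperbolic (`l ≠ 0`, `|l| ≠ 1`) and `C₀ = P R(θ) P⁻¹` with
`P = !![a,b;c,d] ∈ SL(2,ℝ)`, there exists `α` with
`tr(C₂C₀) = R cos(θ - α)` where `R = √((l+l⁻¹)² + (l-l⁻¹)²(ac+bd)²)`; moreover
`R ≥ |l + l⁻¹| > 2`. -/
theorem trace_diag_conj_rot_phase (l θ a b c d : ℝ)
    (hl0 : l ≠ 0) (hl1 : |l| ≠ 1) (h : a * d - b * c = 1) :
    (∃ α : ℝ,
      Matrix.trace (!![l, 0; 0, l⁻¹] * (!![a, b; c, d] * Rot θ * (!![a, b; c, d])⁻¹))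
        = Real.sqrt ((l + l⁻¹) ^ 2 + (l - l⁻¹) ^ 2 * (a * c + b * d) ^ 2)
            * Real.cos (θ - α)) ∧
    |l + l⁻¹| ≤ Real.sqrt ((l + l⁻¹) ^ 2 + (l - l⁻¹) ^ 2 * (a * c + b * d) ^ 2) ∧
    2 < |l + l⁻¹| := by
  rw [← mul_pow, trace_diag_mul_conj_rot l l⁻¹ θ a b c d h]
  refine ⟨exists_mul_cos_add_mul_sin_eq_sqrt_mul_cos_sub _ _ θ, ?_, two_lt_abs_add_inv hl0 hl1⟩
  exact abs_le_sqrt (le_add_of_nonneg_right (sq_nonneg _))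
end

section
/- Let C₁ = Φ(a₁) with s₁ = Im(a₁) - Re(a₁), and C₂ = P·Φ(a₂)·P⁻¹ with s₂ = Im(a₂) - Re(a₂) and P ∈ SL(2,ℝ) having (2,1)-entry c ≥ 0. If s₁·s₂ = 1 and Re(a₁) + Re(a₂) is even, then tr(C₁C₂) = 2 - c², so C₁C₂ is hyperbolic with negative trace if and only if c > 2, and parabolic with trace -2 if and only if c = 2. -/
/-! The trace of a product is bilinear in the scalar prefactors, and the signs `(-1) ^ (⌊Re aᵢ⌋ + 1)`
of the two parabolics cancel when `⌊Re a₁⌋ + ⌊Re a₂⌋` is even. What remains is the trace of a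
unipotent matrix times a conjugate of another, which a direct computation with
`P⁻¹ = !![d, -b; -c, a]` shows to be `2 - s₁ s₂ c²`. -/

open Matrix Complex

noncomputable def PhiMat (a : ℂ) : Matrix (Fin 2) (Fin 2) ℝ :=
  ((-1 : ℝ) ^ (⌊a.re⌋ + 1)) • !![1, a.im - a.re; 0, 1]

namespace Matrix

variable {K : Type*} [Field K]

lemma inv_fin_two_of_det_eq_one_s18 {a b c d : K} (h : a * d - b * c = 1) :
    (!![a, b; c, d])⁻¹ = !![d, -b; -c, a] := by
  rw [inv_def, det_fin_two_of, adjugate_fin_two_of, h, Ring.inverse_one, one_smul]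

lemma trace_unipotent_mul_conj_unipotent (s₁ s₂ : K) {a b c d : K} (h : a * d - b * c = 1) :
    trace (!![1, s₁; 0, 1] * (!![a, b; c, d] * !![1, s₂; 0, 1] * (!![a, b; c, d])⁻¹))
      = 2 - s₁ * s₂ * c ^ 2 := by
  rw [inv_fin_two_of_det_eq_one_s18 h]
  simp only [mul_fin_two, trace_fin_two_of]
  linear_combination 2 * h

lemma trace_smul_mul_conj_smul (x y : K) (A B P : Matrix (Fin 2) (Fin 2) K) :
    trace ((x • A) * (P * (y • B) * P⁻¹)) = x * y * trace (A * (P * B * P⁻¹)) := by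
  simp only [Matrix.mul_smul, Matrix.smul_mul, smul_smul, trace_smul, smul_eq_mul, mul_comm y x]

end Matrix

lemma neg_one_zpow_succ_mul_neg_one_zpow_succ {R : Type*} [DivisionRing R] {m n : ℤ}
    (h : Even (m + n)) : (-1 : R) ^ (m + 1) * (-1 : R) ^ (n + 1) = 1 := by
  rw [← zpow_add₀ (neg_ne_zero.mpr one_ne_zero), add_add_add_comm]
  exact (h.add even_two).neg_one_zpow

lemma two_sub_sq_lt_neg_two_iff {c : ℝ} (hc : 0 ≤ c) : 2 - c ^ 2 < -2 ↔ 2 < c := by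
  constructor <;> intro <;> nlinarith

lemma two_sub_sq_eq_neg_two_iff {c : ℝ} (hc : 0 ≤ c) : 2 - c ^ 2 = -2 ↔ c = 2 := by
  rw [show (2 : ℝ) - c ^ 2 = -2 ↔ c ^ 2 = 2 ^ 2 by constructor <;> intro <;> linarith]
  exact pow_left_inj₀ hc zero_le_two two_ne_zero

theorem trace_parab_product_even_case_general (a₁ a₂ : ℂ)
    (a b c d : ℝ) (h : a * d - b * c = 1) (hcpos : 0 ≤ c)
    (hs : (a₁.im - a₁.re) * (a₂.im - a₂.re) = 1)
    (heven : Even (⌊a₁.re⌋ + ⌊a₂.re⌋)) :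
    Matrix.trace (PhiMat a₁ * (!![a, b; c, d] * PhiMat a₂ * (!![a, b; c, d])⁻¹))
      = 2 - c ^ 2 ∧
    (Matrix.trace (PhiMat a₁ * (!![a, b; c, d] * PhiMat a₂ * (!![a, b; c, d])⁻¹)) < -2
      ↔ 2 < c) ∧
    (Matrix.trace (PhiMat a₁ * (!![a, b; c, d] * PhiMat a₂ * (!![a, b; c, d])⁻¹)) = -2
      ↔ c = 2) := by
  have htr : trace (PhiMat a₁ * (!![a, b; c, d] * PhiMat a₂ * (!![a, b; c, d])⁻¹))
      = 2 - c ^ 2 := by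
    rw [PhiMat, PhiMat, trace_smul_mul_conj_smul, neg_one_zpow_succ_mul_neg_one_zpow_succ heven,
      one_mul, trace_unipotent_mul_conj_unipotent _ _ h, hs, one_mul]
  rw [htr]
  exact ⟨rfl, two_sub_sq_lt_neg_two_iff hcpos, two_sub_sq_eq_neg_two_iff hcpos⟩

/-- Let `C₁ = Φ(a₁)` with `s₁ = Im a₁ - Re a₁` and `C₂ = P Φ(a₂) P⁻¹` with
`s₂ = Im a₂ - Re a₂`, `P = !![a,b;c,d] ∈ SL(2,ℝ)` having `(2,1)`-entry `c ≥ 0`.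
If `s₁ s₂ = 1` and `Re a₁ + Re a₂` is even, then `tr(C₁C₂) = 2 - c²`; hence
`tr(C₁C₂) < -2 ↔ c > 2` and `tr(C₁C₂) = -2 ↔ c = 2`. -/
theorem trace_parab_product_even_case (a₁ a₂ : ℂ)
    (h₁ : a₁ = 1 ∨ a₁ = -1 ∨ a₁ = Complex.I ∨ a₁ = -Complex.I)
    (h₂ : a₂ = 1 ∨ a₂ = -1 ∨ a₂ = Complex.I ∨ a₂ = -Complex.I)
    (a b c d : ℝ) (h : a * d - b * c = 1) (hcpos : 0 ≤ c)
    (hs : (a₁.im - a₁.re) * (a₂.im - a₂.re) = 1)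
    (heven : Even (⌊a₁.re⌋ + ⌊a₂.re⌋)) :
    Matrix.trace (PhiMat a₁ * (!![a, b; c, d] * PhiMat a₂ * (!![a, b; c, d])⁻¹))
      = 2 - c ^ 2 ∧
    (Matrix.trace (PhiMat a₁ * (!![a, b; c, d] * PhiMat a₂ * (!![a, b; c, d])⁻¹)) < -2
      ↔ 2 < c) ∧
    (Matrix.trace (PhiMat a₁ * (!![a, b; c, d] * PhiMat a₂ * (!![a, b; c, d])⁻¹)) = -2
      ↔ c = 2) :=
  trace_parab_product_even_case_general a₁ a₂ a b c d h hcpos hs heven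
end
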